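/- arXiv:1701.08314 — 3 statements merged into one kernel-verified Lean document; each statement's English description precedes it below -/
import Mathlib

section
/- For a full-diversity lattice Λ' in ℝⁿ with product distance d_prod(Λ'), and for any diagonal matrix H with |det H| = D, the minimum squared Euclidean distance of HΛ' satisfies min_{x∈Λ'\{0}} ‖Hx‖² ≥ n · D^{2/n} · d_prod(Λ')^{2/n}. -/
open Finset

/-- For a full-diversity lattice `Λ'` in ℝⁿ with product distance
`dprod`, and any diagonal matrix `H = diag h` with `|det H| = D`, every nonzero
lattice point satisfies `‖Hx‖² ≥ n · D^(2/n) · dprod^(2/n)`. -/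
theorem min_dist_lower_bound
    (n : ℕ) (hn : 0 < n) (Λ' : Set (Fin n → ℝ))
    (hfull : ∀ x ∈ Λ', x ≠ 0 → ∀ i, x i ≠ 0)
    (dprod : ℝ) (hdpos : 0 < dprod)
    (hdmin : ∀ x ∈ Λ', x ≠ 0 → dprod ≤ ∏ i, |x i|)
    (h : Fin n → ℝ) (D : ℝ) (hD : |∏ i, h i| = D) :
    ∀ x ∈ Λ', x ≠ 0 →
      (n : ℝ) * D ^ ((2 : ℝ) / n) * dprod ^ ((2 : ℝ) / n)
        ≤ ∑ i, (h i * x i) ^ 2 := by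
  intro x hx hx0
  have hnpos : (0:ℝ) < n := by exact_mod_cast hn
  have hDnn : 0 ≤ D := hD ▸ abs_nonneg _
  rcases eq_or_lt_of_le hDnn with hD0 | hDpos
  · -- D = 0 : right side is zero
    have : D ^ ((2:ℝ)/n) = 0 := by
      rw [← hD0]; exact Real.zero_rpow (by positivity)
    rw [this]
    simp only [mul_zero, zero_mul]
    positivity
  · -- D > 0
    set z : Fin n → ℝ := fun i => (h i * x i) ^ 2 with hz
    have hznn : ∀ i, (0:ℝ) ≤ z i := fun i => sq_nonneg _
    have hw : ∑ _i : Fin n, (n:ℝ)⁻¹ = 1 := by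
      simp [Finset.card_univ]
      field_simp
    have amgm : ∏ i, z i ^ ((n:ℝ)⁻¹) ≤ ∑ i, (n:ℝ)⁻¹ * z i :=
      Real.geom_mean_le_arith_mean_weighted _ _ _ (fun i _ => inv_nonneg.mpr hnpos.le)
        hw (fun i _ => hznn i)
    have hprodz : ∏ i, z i = (D * ∏ i, |x i|) ^ 2 := by
      have : ∏ i, z i = (∏ i, |h i * x i|) ^ 2 := by
        rw [← Finset.prod_pow]
        exact Finset.prod_congr rfl fun i _ => (sq_abs _).symm
      rw [this, Finset.prod_congr rfl (fun i _ => abs_mul (h i) (x i)),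
        Finset.prod_mul_distrib, ← Finset.abs_prod, hD]
    have hprod_rpow : ∏ i, z i ^ ((n:ℝ)⁻¹) = (∏ i, z i) ^ ((n:ℝ)⁻¹) :=
      Real.finset_prod_rpow _ _ (fun i _ => hznn i) _
    have hxabs : dprod ≤ ∏ i, |x i| := hdmin x hx hx0
    have hlow : (D * dprod) ^ ((2:ℝ)/n) ≤ (∏ i, z i) ^ ((n:ℝ)⁻¹) := by
      rw [hprodz, ← Real.rpow_natCast (D * ∏ i, |x i|) 2, ← Real.rpow_mul
        (by positivity)]
      have h2 : ((2:ℕ):ℝ) * (n:ℝ)⁻¹ = 2 / n := by push_cast; ring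
      rw [h2]
      exact Real.rpow_le_rpow (by positivity)
        (mul_le_mul_of_nonneg_left hxabs hDnn) (by positivity)
    have hsum : ∑ i, (n:ℝ)⁻¹ * z i = (n:ℝ)⁻¹ * ∑ i, z i := by
      rw [Finset.mul_sum]
    have hmain : (D * dprod) ^ ((2:ℝ)/n) ≤ (n:ℝ)⁻¹ * ∑ i, z i := by
      calc (D * dprod) ^ ((2:ℝ)/n) ≤ (∏ i, z i) ^ ((n:ℝ)⁻¹) := hlow
        _ = ∏ i, z i ^ ((n:ℝ)⁻¹) := hprod_rpow.symm
        _ ≤ ∑ i, (n:ℝ)⁻¹ * z i := amgm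
        _ = (n:ℝ)⁻¹ * ∑ i, z i := hsum
    have := mul_le_mul_of_nonneg_left hmain hnpos.le
    rw [← mul_assoc, mul_inv_cancel₀ hnpos.ne', one_mul] at this
    calc (n : ℝ) * D ^ ((2:ℝ)/n) * dprod ^ ((2:ℝ)/n)
        = (n : ℝ) * (D * dprod) ^ ((2:ℝ)/n) := by
          rw [Real.mul_rpow hDnn hdpos.le, mul_assoc]
      _ ≤ ∑ i, z i := this
end

section
/- For a full-diversity lattice Λ' in ℝⁿ and any nonzero x ∈ Λ' achieving the product distance (∏|x_i| = d_prod(Λ')), the diagonal matrix H with h_i² = (D · d_prod(Λ'))^{2/n} / x_i² satisfies |det H| = D and ‖Hx‖² = n · D^{2/n} · d_prod(Λ')^{2/n}; hence the infimum over H with |det H| = D of min_{x∈Λ'\{0}} ‖Hx‖² equals exactly n D^{2/n} d_prod(Λ')^{2/n}. -/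
/-!
By AM–GM on the squares `(hᵢ yᵢ)²`, `∑ (hᵢ yᵢ)² ≥ n (|∏ hᵢ| ∏ |yᵢ|)^(2/n) ≥ n (D·dprod)^(2/n)`
for every admissible `h` and nonzero `y ∈ Λ'`. Equality holds for the minimiser `x` with the
scaling `hᵢ = (D·dprod)^(1/n) / |xᵢ|`, which makes all `|hᵢ xᵢ|` equal.
-/

open Finset

section
variable {ι : Type*} [Fintype ι]

theorem card_mul_prod_rpow_inv_card_le_sum [Nonempty ι] {z : ι → ℝ} (hz : ∀ i, 0 ≤ z i) :
    (Fintype.card ι : ℝ) * (∏ i, z i) ^ (Fintype.card ι : ℝ)⁻¹ ≤ ∑ i, z i := by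
  have hcard : (0 : ℝ) < Fintype.card ι := by exact_mod_cast Fintype.card_pos
  have h := Real.geom_mean_le_arith_mean univ (fun _ ↦ 1) z (fun _ _ ↦ zero_le_one)
    (by simpa using hcard) (fun i _ ↦ hz i)
  simp only [Real.rpow_one, sum_const, card_univ, nsmul_eq_mul, mul_one, one_mul] at h
  rwa [le_div_iff₀ hcard, mul_comm] at h

theorem card_mul_prod_abs_rpow_le_sum_sq [Nonempty ι] (v : ι → ℝ) :
    (Fintype.card ι : ℝ) * (∏ i, |v i|) ^ (2 / Fintype.card ι : ℝ) ≤ ∑ i, v i ^ 2 := by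
  have hprod : ∏ i, v i ^ 2 = (∏ i, |v i|) ^ (2 : ℝ) := by
    rw [Real.rpow_two, ← prod_pow]; simp_rw [sq_abs]
  calc (Fintype.card ι : ℝ) * (∏ i, |v i|) ^ (2 / Fintype.card ι : ℝ)
      = Fintype.card ι * (∏ i, v i ^ 2) ^ (Fintype.card ι : ℝ)⁻¹ := by
        rw [hprod, ← Real.rpow_mul (prod_nonneg fun i _ ↦ abs_nonneg _), div_eq_mul_inv]
    _ ≤ ∑ i, v i ^ 2 := card_mul_prod_rpow_inv_card_le_sum fun i ↦ sq_nonneg _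

theorem sum_sq_div_abs_mul_self (A : ℝ) {x : ι → ℝ} (hx : ∀ i, x i ≠ 0) :
    ∑ i, (A / |x i| * x i) ^ 2 = Fintype.card ι * A ^ 2 := by
  have h (i : ι) : (A / |x i| * x i) ^ 2 = A ^ 2 := by
    rw [mul_pow, div_pow, sq_abs, div_mul_cancel₀ _ (pow_ne_zero 2 (hx i))]
  simp [h]

theorem card_mul_rpow_le_sum_sq_mul [Nonempty ι] {D P : ℝ} (hD : 0 ≤ D) (hP : 0 ≤ P)
    {h y : ι → ℝ} (hh : |∏ i, h i| = D) (hy : P ≤ ∏ i, |y i|) :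
    Fintype.card ι * D ^ (2 / Fintype.card ι : ℝ) * P ^ (2 / Fintype.card ι : ℝ)
      ≤ ∑ i, (h i * y i) ^ 2 := by
  have hprod : D * P ≤ ∏ i, |h i * y i| := by
    simp_rw [abs_mul, prod_mul_distrib]
    rw [← abs_prod, hh]
    exact mul_le_mul_of_nonneg_left hy hD
  calc Fintype.card ι * D ^ (2 / Fintype.card ι : ℝ) * P ^ (2 / Fintype.card ι : ℝ)
      = Fintype.card ι * (D * P) ^ (2 / Fintype.card ι : ℝ) := by
        rw [Real.mul_rpow hD hP, mul_assoc]
    _ ≤ Fintype.card ι * (∏ i, |h i * y i|) ^ (2 / Fintype.card ι : ℝ) := by gcongr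
    _ ≤ ∑ i, (h i * y i) ^ 2 := card_mul_prod_abs_rpow_le_sum_sq fun i ↦ h i * y i

end

theorem min_dist_exact_general
    (n : ℕ) (Λ' : Set (Fin n → ℝ))
    (dprod : ℝ) (hdpos : 0 < dprod)
    (hdmin : ∀ y ∈ Λ', y ≠ 0 → dprod ≤ ∏ i, |y i|)
    (D : ℝ) (hD : 0 < D)
    (x : Fin n → ℝ) (hxΛ : x ∈ Λ') (hx0 : x ≠ 0)
    (hxach : ∏ i, |x i| = dprod) :
    (abs (∏ i, (D * dprod) ^ ((1 : ℝ) / n) / |x i|) = D ∧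
      ∑ i, ((D * dprod) ^ ((1 : ℝ) / n) / |x i| * x i) ^ 2
        = (n : ℝ) * D ^ ((2 : ℝ) / n) * dprod ^ ((2 : ℝ) / n)) ∧
    sInf {t : ℝ | ∃ h : Fin n → ℝ, |∏ i, h i| = D ∧
        ∃ y ∈ Λ', y ≠ 0 ∧ t = ∑ i, (h i * y i) ^ 2}
      = (n : ℝ) * D ^ ((2 : ℝ) / n) * dprod ^ ((2 : ℝ) / n) := by
  obtain ⟨i₀, -⟩ := Function.ne_iff.mp hx0
  have : Nonempty (Fin n) := ⟨i₀⟩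
  have hx (i : Fin n) : x i ≠ 0 :=
    abs_ne_zero.mp (prod_ne_zero_iff.mp (hxach ▸ hdpos.ne') i (mem_univ i))
  have hDd : 0 < D * dprod := mul_pos hD hdpos
  set A := (D * dprod) ^ ((1 : ℝ) / n) with hA
  have hAn : A ^ n = D * dprod := by
    rw [hA, one_div, Real.rpow_inv_natCast_pow hDd.le (Fin.pos i₀).ne']
  have hA2 : A ^ 2 = D ^ ((2 : ℝ) / n) * dprod ^ ((2 : ℝ) / n) := by
    rw [← Real.rpow_natCast, ← Real.rpow_mul hDd.le, ← Real.mul_rpow hD.le hdpos.le]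
    ring_nf
  have hdet : abs (∏ i, A / |x i|) = D := by
    rw [prod_div_distrib, prod_const, hxach, card_univ, Fintype.card_fin, hAn,
      mul_div_cancel_right₀ _ hdpos.ne', abs_of_pos hD]
  have hnorm : ∑ i, (A / |x i| * x i) ^ 2 = n * D ^ ((2 : ℝ) / n) * dprod ^ ((2 : ℝ) / n) := by
    rw [sum_sq_div_abs_mul_self A hx, Fintype.card_fin, hA2, mul_assoc]
  refine ⟨⟨hdet, hnorm⟩, IsLeast.csInf_eq ⟨⟨_, hdet, x, hxΛ, hx0, hnorm.symm⟩, ?_⟩⟩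
  rintro t ⟨h, hh, y, hy, hy0, rfl⟩
  simpa using card_mul_rpow_le_sum_sq_mul hD.le hdpos.le hh (hdmin y hy hy0)

/-- for `x` achieving the product distance, the diagonal matrix with
`hᵢ² = (D·dprod)^(2/n)/xᵢ²` has `|det H| = D` and achieves
`‖Hx‖² = n·D^(2/n)·dprod^(2/n)`; hence the infimum over `H` with `|det H| = D` of
the minimum squared distance of `HΛ'` equals exactly `n·D^(2/n)·dprod^(2/n)`. -/
theorem min_dist_exact
    (n : ℕ) (hn : 0 < n) (Λ' : Set (Fin n → ℝ))
    (hfull : ∀ y ∈ Λ', y ≠ 0 → ∀ i, y i ≠ 0)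
    (dprod : ℝ) (hdpos : 0 < dprod)
    (hdmin : ∀ y ∈ Λ', y ≠ 0 → dprod ≤ ∏ i, |y i|)
    (D : ℝ) (hD : 0 < D)
    (x : Fin n → ℝ) (hxΛ : x ∈ Λ') (hx0 : x ≠ 0)
    (hxach : ∏ i, |x i| = dprod) :
    (abs (∏ i, (D * dprod) ^ ((1 : ℝ) / n) / |x i|) = D ∧
      ∑ i, ((D * dprod) ^ ((1 : ℝ) / n) / |x i| * x i) ^ 2
        = (n : ℝ) * D ^ ((2 : ℝ) / n) * dprod ^ ((2 : ℝ) / n)) ∧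
    sInf {t : ℝ | ∃ h : Fin n → ℝ, |∏ i, h i| = D ∧
        ∃ y ∈ Λ', y ≠ 0 ∧ t = ∑ i, (h i * y i) ^ 2}
      = (n : ℝ) * D ^ ((2 : ℝ) / n) * dprod ^ ((2 : ℝ) / n) :=
  min_dist_exact_general n Λ' dprod hdpos hdmin D hD x hxΛ hx0 hxach
end

section
/- If a lattice Λ ⊂ ℝⁿ does NOT have full diversity (some nonzero x ∈ Λ has a zero coordinate), then inf over diagonal H with ∏|h_i| = 1 of min_{y∈Λ\{0}} ‖Hy‖² = 0. -/
open Finset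

/-- if a lattice `Λ ⊂ ℝⁿ` is not full-diversity (some nonzero point
has a zero coordinate), then the infimum over diagonal `H` with `∏|hᵢ| = 1` of the
minimum squared distance of `HΛ` is `0`. -/
theorem not_full_diversity_inf_zero
    (n : ℕ) (hn : 0 < n) (Λ : Set (Fin n → ℝ))
    (h0 : (0 : Fin n → ℝ) ∈ Λ)
    (hadd : ∀ x ∈ Λ, ∀ y ∈ Λ, x + y ∈ Λ)
    (hneg : ∀ x ∈ Λ, -x ∈ Λ)
    (hnotdiv : ∃ x ∈ Λ, x ≠ 0 ∧ ∃ i, x i = 0) :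
    sInf {t : ℝ | ∃ h : Fin n → ℝ, (∀ i, h i ≠ 0) ∧ ∏ i, |h i| = 1 ∧
        ∃ y ∈ Λ, y ≠ 0 ∧ t = ∑ i, (h i * y i) ^ 2} = 0 := by
  set S : Set ℝ := {t : ℝ | ∃ h : Fin n → ℝ, (∀ i, h i ≠ 0) ∧ ∏ i, |h i| = 1 ∧
        ∃ y ∈ Λ, y ≠ 0 ∧ t = ∑ i, (h i * y i) ^ 2} with hS
  obtain ⟨x, hxΛ, hx0, i₀, hxi⟩ := hnotdiv
  have hSnonneg : ∀ t ∈ S, (0:ℝ) ≤ t := by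
    rintro t ⟨h, -, -, y, -, -, rfl⟩
    positivity
  have hbdd : BddBelow S := ⟨0, hSnonneg⟩
  -- key: for every ε > 0 there is t ∈ S with t ≤ ε
  have key : ∀ ε : ℝ, 0 < ε → ∃ t ∈ S, t ≤ ε := by
    intro ε hε
    set A : ℝ := ∑ i, (x i) ^ 2 with hA
    have hA0 : 0 ≤ A := by positivity
    set c : ℝ := Real.sqrt (A / ε) + 1 with hc
    have hc0 : 0 < c := by positivity
    set h : Fin n → ℝ := fun i => if i = i₀ then c ^ (n - 1) else c⁻¹ with hh
    have hne : ∀ i, h i ≠ 0 := by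
      intro i
      simp only [hh]
      split
      · exact pow_ne_zero _ hc0.ne'
      · exact inv_ne_zero hc0.ne'
    have hprod : ∏ i, |h i| = 1 := by
      rw [← Finset.mul_prod_erase Finset.univ _ (Finset.mem_univ i₀)]
      have h1 : |h i₀| = c ^ (n - 1) := by
        simp [hh, abs_of_pos (pow_pos hc0 _)]
      have h2 : ∏ i ∈ Finset.univ.erase i₀, |h i| = (c⁻¹) ^ (n - 1) := by
        rw [Finset.prod_congr rfl (fun i hi => ?_), Finset.prod_const,
          Finset.card_erase_of_mem (Finset.mem_univ i₀), Finset.card_univ, Fintype.card_fin]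
        have : i ≠ i₀ := (Finset.mem_erase.mp hi).1
        simp [hh, this, abs_of_pos (inv_pos.mpr hc0)]
      rw [h1, h2, ← mul_pow, mul_inv_cancel₀ hc0.ne', one_pow]
    refine ⟨∑ i, (h i * x i) ^ 2, ⟨h, hne, hprod, x, hxΛ, hx0, rfl⟩, ?_⟩
    have hsum : ∑ i, (h i * x i) ^ 2 = c⁻¹ ^ 2 * A := by
      rw [hA, Finset.mul_sum]
      refine Finset.sum_congr rfl fun i _ => ?_
      by_cases hi : i = i₀
      · subst hi; simp [hxi]
      · simp [hh, hi, mul_pow]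
    rw [hsum]
    have hs : Real.sqrt (A / ε) ^ 2 = A / ε := Real.sq_sqrt (by positivity)
    have hs0 : 0 ≤ Real.sqrt (A / ε) := Real.sqrt_nonneg _
    rw [inv_pow, inv_mul_le_iff₀ (by positivity)]
    have hAe : A / ε * ε = A := div_mul_cancel₀ A hε.ne'
    have hc2 : c ^ 2 * ε = (A / ε) * ε + (2 * Real.sqrt (A / ε) + 1) * ε := by
      rw [hc]; nlinarith [hs]
    have hpos : (0:ℝ) ≤ (2 * Real.sqrt (A / ε) + 1) * ε :=
      mul_nonneg (by linarith) hε.le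
    clear_value h c A
    linarith
  have hSne : S.Nonempty := by
    obtain ⟨t, ht, -⟩ := key 1 one_pos
    exact ⟨t, ht⟩
  have h1 : 0 ≤ sInf S := le_csInf hSne hSnonneg
  have h2 : sInf S ≤ 0 := by
    refine le_of_forall_pos_le_add fun ε hε => ?_
    obtain ⟨t, ht, htε⟩ := key ε hε
    calc sInf S ≤ t := csInf_le hbdd ht
      _ ≤ ε := htε
      _ = 0 + ε := (zero_add ε).symm
  linarith
end
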